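/- arXiv:1202.5249 — 2 statements merged into one kernel-verified Lean document; each statement's English description precedes it below -/
import Mathlib

section
/- Let p, q ∈ C with dist(p, q) ≤ ρ for some ρ > 0, and let b ∈ B satisfy dist(b, p_B) ≤ ρ/√2 and dist(b, q_B) ≤ ρ/√2. Let p''' = (p_A, b) and q''' = (q_A, b) be the projections of p and q onto the manifold m(b). Then the straight-line segment joining p''' and q''' is contained in the union of the closed balls of radius ρ centered at p and at q: segment ℝ p''' q''' ⊆ closedBall p ρ ∪ closedBall q ρ. -/
open Metric

/-- The configuration space `C = A ×₂ B`, the ℓ²-product of two Euclidean spaces. -/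
abbrev Csp (k m : ℕ) : Type :=
  WithLp 2 (EuclideanSpace ℝ (Fin k) × EuclideanSpace ℝ (Fin m))

/-- The point of `C` with components `a ∈ A` and `b ∈ B`. -/
noncomputable def mkC {k m : ℕ} (a : EuclideanSpace ℝ (Fin k))
    (b : EuclideanSpace ℝ (Fin m)) : Csp k m :=
  (WithLp.equiv 2 _).symm (a, b)

/-- The `A`-component of a point of `C`. -/
noncomputable def fstC {k m : ℕ} (x : Csp k m) : EuclideanSpace ℝ (Fin k) :=
  (WithLp.equiv 2 _ x).1

/-- The `B`-component of a point of `C`. -/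
noncomputable def sndC {k m : ℕ} (x : Csp k m) : EuclideanSpace ℝ (Fin m) :=
  (WithLp.equiv 2 _ x).2

/-- If `m(b)` is simultaneously `ρ/√2`-intersecting for `p` and `q`, where
`dist p q ≤ ρ`, then the segment joining the projections `p''' = (p_A, b)` and
`q''' = (q_A, b)` of `p` and `q` onto `m(b)` is contained in the union of the closed
balls of radius `ρ` around `p` and `q`. -/
theorem stmt1 (k m : ℕ) (ρ : ℝ) (hρ : 0 < ρ) (p q : Csp k m) (hpq : dist p q ≤ ρ)
    (b : EuclideanSpace ℝ (Fin m))
    (hbp : dist b (sndC p) ≤ ρ / Real.sqrt 2)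
    (hbq : dist b (sndC q) ≤ ρ / Real.sqrt 2) :
    segment ℝ (mkC (fstC p) b) (mkC (fstC q) b) ⊆ closedBall p ρ ∪ closedBall q ρ := by
  rintro x ⟨s, t, hs, ht, hst, rfl⟩
  have h2 : Real.sqrt 2 ^ 2 = 2 := Real.sq_sqrt (by norm_num)
  have hbp2 : dist b (sndC p) ^ 2 ≤ ρ ^ 2 / 2 := by
    have := pow_le_pow_left₀ dist_nonneg hbp 2
    rw [div_pow, h2] at this
    linarith
  have hbq2 : dist b (sndC q) ^ 2 ≤ ρ ^ 2 / 2 := by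
    have := pow_le_pow_left₀ dist_nonneg hbq 2
    rw [div_pow, h2] at this
    linarith
  have hd1 : dist (fstC p) (fstC q) ≤ ρ := by
    refine le_trans ?_ hpq
    rw [WithLp.prod_dist_eq_of_L2]
    calc dist (fstC p) (fstC q) = Real.sqrt (dist (fstC p) (fstC q) ^ 2) :=
          (Real.sqrt_sq dist_nonneg).symm
      _ ≤ _ := Real.sqrt_le_sqrt (le_add_of_nonneg_right (sq_nonneg _))
  -- component computations
  have hfst : (s • mkC (fstC p) b + t • mkC (fstC q) b).fst
      = s • fstC p + t • fstC q := rfl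
  have hsnd : (s • mkC (fstC p) b + t • mkC (fstC q) b).snd = b := by
    show s • b + t • b = b
    rw [← add_smul, hst, one_smul]
  have hdp : dist (s • mkC (fstC p) b + t • mkC (fstC q) b).fst p.fst
      = t * dist (fstC p) (fstC q) := by
    rw [hfst]
    have : s • fstC p + t • fstC q - p.fst = t • (fstC q - fstC p) := by
      have hs1 : s = 1 - t := by linarith
      show s • fstC p + t • fstC q - fstC p = t • (fstC q - fstC p)
      rw [hs1]; module
    rw [dist_eq_norm, this, norm_smul, Real.norm_of_nonneg ht,
      ← dist_eq_norm, dist_comm]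
  have hdq : dist (s • mkC (fstC p) b + t • mkC (fstC q) b).fst q.fst
      = s * dist (fstC p) (fstC q) := by
    rw [hfst]
    have : s • fstC p + t • fstC q - q.fst = s • (fstC p - fstC q) := by
      have ht1 : t = 1 - s := by linarith
      show s • fstC p + t • fstC q - fstC q = s • (fstC p - fstC q)
      rw [ht1]; module
    rw [dist_eq_norm, this, norm_smul, Real.norm_of_nonneg hs, ← dist_eq_norm]
  rcases le_or_gt t (1 / 2) with hhalf | hhalf
  · left
    rw [mem_closedBall, WithLp.prod_dist_eq_of_L2, hdp, hsnd]
    rw [show dist b p.snd = dist b (sndC p) from rfl]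
    have h3 : t * dist (fstC p) (fstC q) ≤ (1 / 2) * ρ :=
      mul_le_mul hhalf hd1 dist_nonneg (by norm_num)
    have h4 := pow_le_pow_left₀ (mul_nonneg ht dist_nonneg) h3 2
    have harg : (t * dist (fstC p) (fstC q)) ^ 2 + dist b (sndC p) ^ 2 ≤ ρ ^ 2 := by
      nlinarith
    calc Real.sqrt _ ≤ Real.sqrt (ρ ^ 2) := Real.sqrt_le_sqrt harg
      _ = ρ := Real.sqrt_sq hρ.le
  · right
    have hs2 : s ≤ 1 / 2 := by linarith
    rw [mem_closedBall, WithLp.prod_dist_eq_of_L2, hdq, hsnd]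
    rw [show dist b q.snd = dist b (sndC q) from rfl]
    have h3 : s * dist (fstC p) (fstC q) ≤ (1 / 2) * ρ :=
      mul_le_mul hs2 hd1 dist_nonneg (by norm_num)
    have h4 := pow_le_pow_left₀ (mul_nonneg hs dist_nonneg) h3 2
    have harg : (s * dist (fstC p) (fstC q)) ^ 2 + dist b (sndC q) ^ 2 ≤ ρ ^ 2 := by
      nlinarith
    calc Real.sqrt _ ≤ Real.sqrt (ρ ^ 2) := Real.sqrt_le_sqrt harg
      _ = ρ := Real.sqrt_sq hρ.le
end

section
/- Let p, q ∈ C be two points with dist(p, q) ≤ ρ for some ρ > 0. Let a_p, a_q ∈ A satisfy dist(a_p, p_A) ≤ ρ/√2 and dist(a_q, q_A) ≤ ρ/√2, and let b ∈ B satisfy simultaneously dist(b, p_B) ≤ ρ/√2 and dist(b, q_B) ≤ ρ/√2. Let p' = (a_p, p_B) and q' = (a_q, q_B) be the projections of p and q on the manifolds m(a_p) and m(a_q), respectively. Then there exists a continuous path γ : [0,1] → C with γ(0) = p' and γ(1) = q' whose image is contained in (closedBall p ρ ∪ closedBall q ρ) ∩ (m(a_p) ∪ m(b) ∪ m(a_q)),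 i.e., a path lying on the three manifolds within the union of the two balls. -/
open Metric

/-- The manifold `m(a) = {a} × B ⊆ C` determined by a point `a ∈ A`. -/
def mA {k m : ℕ} (a : EuclideanSpace ℝ (Fin k)) : Set (Csp k m) :=
  {x | fstC x = a}

/-- The manifold `m(b) = A × {b} ⊆ C` determined by a point `b ∈ B`. -/
def mB {k m : ℕ} (b : EuclideanSpace ℝ (Fin m)) : Set (Csp k m) :=
  {x | sndC x = b}

-- Stated for normed spaces: the topological-vector-space instances on `Csp` are slow to unify.
theorem Convex.joinedIn {E : Type*} [SeminormedAddCommGroup E] [NormedSpace ℝ E] {s : Set E}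
    (hs : Convex ℝ s) {x y : E} (hx : x ∈ s) (hy : y ∈ s) : JoinedIn s x y :=
  .of_segment_subset (hs.segment_subset hx hy)

variable {k m : ℕ}

lemma convex_mA (a : EuclideanSpace ℝ (Fin k)) : Convex ℝ (mA a : Set (Csp k m)) :=
  (convex_singleton a).linear_preimage (WithLp.fstₗ 2 ℝ _ _)

lemma convex_mB (b : EuclideanSpace ℝ (Fin m)) : Convex ℝ (mB b : Set (Csp k m)) :=
  (convex_singleton b).linear_preimage (WithLp.sndₗ 2 ℝ _ _)

lemma mkC_mem_closedBall {x : Csp k m} {a : EuclideanSpace ℝ (Fin k)}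
    {b : EuclideanSpace ℝ (Fin m)} {ρ : ℝ} (hρ : 0 ≤ ρ)
    (ha : dist a (fstC x) ≤ ρ / √2) (hb : dist b (sndC x) ≤ ρ / √2) :
    mkC a b ∈ closedBall x ρ := by
  have hsq : (ρ / √2) ^ 2 = ρ ^ 2 / 2 := by rw [div_pow, Real.sq_sqrt zero_le_two]
  have hsum : dist a (fstC x) ^ 2 + dist b (sndC x) ^ 2 ≤ ρ ^ 2 := by
    nlinarith [pow_le_pow_left₀ dist_nonneg ha 2, pow_le_pow_left₀ dist_nonneg hb 2]
  rw [mem_closedBall, WithLp.prod_dist_eq_of_L2]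
  exact Real.sqrt_le_iff.2 ⟨hρ, hsum⟩

lemma dist_midpoint_fstC_le {x y : Csp k m} {ρ : ℝ} (h : dist x y ≤ ρ) :
    dist (midpoint ℝ (fstC x) (fstC y)) (fstC x) ≤ ρ / √2 ∧
      dist (midpoint ℝ (fstC x) (fstC y)) (fstC y) ≤ ρ / √2 := by
  have hρ : 0 ≤ ρ := dist_nonneg.trans h
  have half : dist (fstC x) (fstC y) / 2 ≤ ρ / √2 := calc
    _ ≤ ρ / 2 := by gcongr; exact (WithLp.dist_fst_le x y).trans h
    _ ≤ ρ / √2 := div_le_div_of_nonneg_left hρ (by positivity)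
      (Real.sqrt_le_iff.2 ⟨by norm_num, by norm_num⟩)
  rw [dist_midpoint_left, dist_midpoint_right, Real.norm_two, inv_mul_eq_div]
  exact ⟨half, half⟩

theorem stmt2_general (k m : ℕ) (ρ : ℝ) (p q : Csp k m) (hpq : dist p q ≤ ρ)
    (aP aQ : EuclideanSpace ℝ (Fin k)) (b : EuclideanSpace ℝ (Fin m))
    (haP : dist aP (fstC p) ≤ ρ / Real.sqrt 2)
    (haQ : dist aQ (fstC q) ≤ ρ / Real.sqrt 2)
    (hbp : dist b (sndC p) ≤ ρ / Real.sqrt 2)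
    (hbq : dist b (sndC q) ≤ ρ / Real.sqrt 2) :
    ∃ γ : Path (mkC aP (sndC p)) (mkC aQ (sndC q)),
      ∀ t, γ t ∈ (closedBall p ρ ∪ closedBall q ρ) ∩ (mA aP ∪ mB b ∪ mA aQ) := by
  set S := (closedBall p ρ ∪ closedBall q ρ) ∩ (mA aP ∪ mB b ∪ mA aQ)
  have hρ : 0 ≤ ρ := dist_nonneg.trans hpq
  have hself : ∀ y : EuclideanSpace ℝ (Fin m), dist y y ≤ ρ / √2 :=
    fun y ↦ (dist_self y).trans_le (by positivity)
  set z := midpoint ℝ (fstC p) (fstC q)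
  obtain ⟨hzp, hzq⟩ := dist_midpoint_fstC_le hpq
  have leg : ∀ {s : Set (Csp k m)}, Convex ℝ s → s ⊆ S → ∀ {x y}, x ∈ s → y ∈ s →
      JoinedIn S x y := fun hs hsS _ _ hx hy ↦ (hs.joinedIn hx hy).mono hsS
  have h₁ : JoinedIn S (mkC aP (sndC p)) (mkC aP b) :=
    leg ((convex_closedBall p ρ).inter (convex_mA aP)) (fun _ hx ↦ ⟨.inl hx.1, .inl (.inl hx.2)⟩)
      ⟨mkC_mem_closedBall hρ haP (hself _), rfl⟩ ⟨mkC_mem_closedBall hρ haP hbp, rfl⟩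
  have h₂ : JoinedIn S (mkC aP b) (mkC z b) :=
    leg ((convex_closedBall p ρ).inter (convex_mB b)) (fun _ hx ↦ ⟨.inl hx.1, .inl (.inr hx.2)⟩)
      ⟨mkC_mem_closedBall hρ haP hbp, rfl⟩ ⟨mkC_mem_closedBall hρ hzp hbp, rfl⟩
  have h₃ : JoinedIn S (mkC z b) (mkC aQ b) :=
    leg ((convex_closedBall q ρ).inter (convex_mB b)) (fun _ hx ↦ ⟨.inr hx.1, .inl (.inr hx.2)⟩)
      ⟨mkC_mem_closedBall hρ hzq hbq, rfl⟩ ⟨mkC_mem_closedBall hρ haQ hbq, rfl⟩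
  have h₄ : JoinedIn S (mkC aQ b) (mkC aQ (sndC q)) :=
    leg ((convex_closedBall q ρ).inter (convex_mA aQ)) (fun _ hx ↦ ⟨.inr hx.1, .inr hx.2⟩)
      ⟨mkC_mem_closedBall hρ haQ hbq, rfl⟩ ⟨mkC_mem_closedBall hρ haQ (hself _), rfl⟩
  have h := ((h₁.trans h₂).trans h₃).trans h₄
  exact ⟨h.somePath, h.somePath_mem⟩

/-- If `m(a_p)` and `m(a_q)` are `ρ/√2`-intersecting for `p` and `q` respectively,
`dist p q ≤ ρ`, and `m(b)` is simultaneously `ρ/√2`-intersecting for `p` and `q`,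
then there is a continuous path from `p' = (a_p, p_B)` to `q' = (a_q, q_B)` lying on
the manifolds `m(a_p) ∪ m(b) ∪ m(a_q)` within `closedBall p ρ ∪ closedBall q ρ`. -/
theorem stmt2 (k m : ℕ) (ρ : ℝ) (hρ : 0 < ρ) (p q : Csp k m) (hpq : dist p q ≤ ρ)
    (aP aQ : EuclideanSpace ℝ (Fin k)) (b : EuclideanSpace ℝ (Fin m))
    (haP : dist aP (fstC p) ≤ ρ / Real.sqrt 2)
    (haQ : dist aQ (fstC q) ≤ ρ / Real.sqrt 2)
    (hbp : dist b (sndC p) ≤ ρ / Real.sqrt 2)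
    (hbq : dist b (sndC q) ≤ ρ / Real.sqrt 2) :
    ∃ γ : Path (mkC aP (sndC p)) (mkC aQ (sndC q)),
      ∀ t, γ t ∈ (closedBall p ρ ∪ closedBall q ρ) ∩ (mA aP ∪ mB b ∪ mA aQ) :=
  stmt2_general k m ρ p q hpq aP aQ b haP haQ hbp hbq
end
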